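/- arXiv:2410.12358 — 4 statements merged into one kernel-verified Lean document; each statement's English description precedes it below -/
import Mathlib

section
/- Let A be an n×n complex matrix with spectral radius strictly less than 1 and b ∈ ℂⁿ such that (A,b) is a reachable pair (i.e., the vectors b, Ab, …, A^{n-1}b span ℂⁿ). Define G(θ) = (I − e^{−iθ}A)^{−1} b for θ ∈ [0,2π). Then for any m ≤ n pairwise distinct angles θ₁,…,θ_m ∈ [0,2π), the vectors G(θ₁),…,G(θ_m) are linearly independent in ℂⁿ. -/
open Matrix

noncomputable def Gv {n : ℕ} (A : Matrix (Fin n) (Fin n) ℂ) (b : Fin n → ℂ) (θ : ℝ) :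
    Fin n → ℂ :=
  ((1 : Matrix (Fin n) (Fin n) ℂ) - Complex.exp (-(θ : ℂ) * Complex.I) • A)⁻¹ *ᵥ b

def SchurStable {n : ℕ} (A : Matrix (Fin n) (Fin n) ℂ) : Prop :=
  ∀ z ∈ spectrum ℂ A, ‖z‖ < 1

def Reachable {n : ℕ} (A : Matrix (Fin n) (Fin n) ℂ) (b : Fin n → ℂ) : Prop :=
  Submodule.span ℂ (Set.range fun k : Fin n => (A ^ (k : ℕ)) *ᵥ b) = ⊤

/-! If `∑ₖ cₖ (1 - zₖ A)⁻¹ b = 0`, multiplying by `∏ⱼ (1 - zⱼ A)` gives `q(A) b = 0` for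
`q = ∑ₖ cₖ ∏_{j ≠ k} (1 - zⱼ X)`, a polynomial of degree `< m ≤ n`. Reachability makes
`b, A b, …, A^{n-1} b` linearly independent, so `q = 0`, and evaluating `q` at `zₖ⁻¹` isolates `cₖ`.
Here `zₖ = e^{-iθₖ}` are distinct points of the unit circle, where `1 - zₖ A` is invertible by
Schur stability. -/

open Polynomial Finset

theorem isUnit_one_sub_smul_of_inv_notMem_spectrum {R A : Type*} [Field R] [Ring A]
    [Algebra R A] {a : A} {z : R} (hz : z ≠ 0) (h : z⁻¹ ∉ spectrum R a) :
    IsUnit (1 - z • a) := by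
  have hfactor : 1 - z • a = algebraMap R A z * (algebraMap R A z⁻¹ - a) := by
    rw [mul_sub, ← map_mul, mul_inv_cancel₀ hz, map_one, Algebra.smul_def]
  rw [hfactor]
  exact (hz.isUnit.map _).mul (spectrum.notMem_iff.mp h)

section Reciprocal

variable {K κ : Type*} [Field K] [Fintype κ] [DecidableEq κ]

theorem natDegree_prod_erase_one_sub_C_mul_X_lt (z : κ → K) (k : κ) :
    (∏ j ∈ univ.erase k, (1 - C (z j) * X)).natDegree < Fintype.card κ := by
  have hfactor : ∀ j, (1 - C (z j) * X).natDegree ≤ 1 := fun j => by compute_degree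
  calc (∏ j ∈ univ.erase k, (1 - C (z j) * X)).natDegree
      ≤ ∑ j ∈ univ.erase k, (1 - C (z j) * X).natDegree := natDegree_prod_le _ _
    _ ≤ #(univ.erase k) := by simpa using sum_le_sum fun j (_ : j ∈ univ.erase k) => hfactor j
    _ < Fintype.card κ := card_erase_lt_of_mem (mem_univ k)

variable {z : κ → K}

theorem eval_inv_prod_erase_one_sub_C_mul_X_eq_zero {j k : κ} (hz0 : z k ≠ 0) (hjk : j ≠ k) :
    (∏ i ∈ univ.erase j, (1 - C (z i) * X)).eval (z k)⁻¹ = 0 := by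
  rw [eval_prod]
  exact prod_eq_zero (mem_erase.mpr ⟨hjk.symm, mem_univ k⟩) (by simp [hz0])

theorem eval_inv_prod_erase_one_sub_C_mul_X_ne_zero (hz : Function.Injective z) {k : κ}
    (hz0 : z k ≠ 0) :
    (∏ i ∈ univ.erase k, (1 - C (z i) * X)).eval (z k)⁻¹ ≠ 0 := by
  rw [eval_prod, prod_ne_zero_iff]
  intro i hi
  simp only [eval_sub, eval_one, eval_mul, eval_C, eval_X, sub_ne_zero, ne_comm (a := (1 : K)),
    Ne, mul_inv_eq_one₀ hz0]
  exact fun h => (mem_erase.mp hi).1 (hz h)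

theorem linearIndependent_prod_erase_one_sub_C_mul_X (hz : Function.Injective z)
    (hz0 : ∀ k, z k ≠ 0) :
    LinearIndependent K fun k => ∏ j ∈ univ.erase k, (1 - C (z j) * X) := by
  rw [Fintype.linearIndependent_iff]
  intro c hc k
  have heval := congrArg (eval (z k)⁻¹) hc
  rw [eval_finsetSum, sum_eq_single k (fun j _ hjk => by
    rw [eval_smul, eval_inv_prod_erase_one_sub_C_mul_X_eq_zero (hz0 k) hjk, smul_zero])
    (fun h => absurd (mem_univ k) h), eval_smul, eval_zero, smul_eq_mul] at heval
  exact (mul_eq_zero.mp heval).resolve_right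
    (eval_inv_prod_erase_one_sub_C_mul_X_ne_zero hz (hz0 k))

end Reciprocal

section Krylov

variable {K ι : Type*} [Field K] [Fintype ι] [DecidableEq ι] {A : Matrix ι ι K} {b : ι → K}
  {d : ℕ}

theorem aeval_mulVec_eq_sum_coeff_smul {q : K[X]} (hq : q.natDegree < d) :
    aeval A q *ᵥ b = ∑ i : Fin d, q.coeff i • (A ^ (i : ℕ) *ᵥ b) := by
  rw [aeval_eq_sum_range' hq, sum_mulVec, ← Fin.sum_univ_eq_sum_range]
  simp only [smul_mulVec]

theorem eq_zero_of_aeval_mulVec_eq_zero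
    (hb : LinearIndependent K fun i : Fin d => A ^ (i : ℕ) *ᵥ b) {q : K[X]}
    (hq : q.natDegree < d) (h : aeval A q *ᵥ b = 0) : q = 0 := by
  rw [aeval_mulVec_eq_sum_coeff_smul hq] at h
  have hcoeff := Fintype.linearIndependent_iff.mp hb _ h
  ext i
  rw [coeff_zero]
  rcases lt_or_ge i d with hi | hi
  · exact hcoeff ⟨i, hi⟩
  · exact coeff_eq_zero_of_natDegree_lt (hq.trans_le hi)

theorem aeval_eq_aeval_mul_mul_nonsing_inv {f : K[X]} (hf : IsUnit (aeval A f)) (g : K[X]) :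
    aeval A g = aeval A (f * g) * (aeval A f)⁻¹ := by
  rw [map_mul, ((Commute.all f g).map (aeval A)).eq, mul_assoc,
    mul_nonsing_inv _ ((isUnit_iff_isUnit_det _).mp hf), mul_one]

theorem linearIndependent_inv_one_sub_smul_mulVec {κ : Type*} [Fintype κ] [DecidableEq κ]
    (hb : LinearIndependent K fun i : Fin d => A ^ (i : ℕ) *ᵥ b) {z : κ → K}
    (hz : Function.Injective z) (hz0 : ∀ k, z k ≠ 0) (hA : ∀ k, IsUnit (1 - z k • A))
    (hκ : Fintype.card κ ≤ d) :
    LinearIndependent K fun k => (1 - z k • A)⁻¹ *ᵥ b := by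
  set P : κ → K[X] := fun k => ∏ j ∈ univ.erase k, (1 - C (z j) * X)
  have haeval : ∀ k, aeval A (1 - C (z k) * X) = 1 - z k • A := fun k => by
    simp [Algebra.smul_def]
  have hP_aeval : ∀ k, aeval A (P k) = aeval A (∏ j, (1 - C (z j) * X)) * (1 - z k • A)⁻¹ :=
    fun k => by
      rw [← mul_prod_erase univ _ (mem_univ k), ← haeval k]
      exact aeval_eq_aeval_mul_mul_nonsing_inv (by rw [haeval]; exact hA k) (P k)
  rw [Fintype.linearIndependent_iff]
  intro c hc k
  have hdeg : (∑ j, c j • P j).natDegree < d := by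
    have hP_deg : ∀ j, (c j • P j).natDegree ≤ Fintype.card κ - 1 := fun j =>
      (natDegree_smul_le _ _).trans
        (Nat.le_sub_one_of_lt (natDegree_prod_erase_one_sub_C_mul_X_lt z j))
    have hκ_pos := Fintype.card_pos_iff.mpr ⟨k⟩
    exact (natDegree_sum_le_of_forall_le _ _ fun j _ => hP_deg j).trans_lt (by omega)
  have hkernel : aeval A (∑ j, c j • P j) *ᵥ b = 0 := by
    calc aeval A (∑ j, c j • P j) *ᵥ b
        = aeval A (∏ j, (1 - C (z j) * X)) *ᵥ ∑ j, c j • ((1 - z j • A)⁻¹ *ᵥ b) := by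
          simp only [map_sum, map_smul, hP_aeval, sum_mulVec, smul_mulVec, mulVec_sum,
            mulVec_smul, mulVec_mulVec]
      _ = 0 := by rw [hc, mulVec_zero]
  exact Fintype.linearIndependent_iff.mp (linearIndependent_prod_erase_one_sub_C_mul_X hz hz0) c
    (eq_zero_of_aeval_mulVec_eq_zero hb hdeg hkernel) k

end Krylov

theorem injOn_exp_neg_mul_I_Ico {a b : ℝ} (h : b - a ≤ 2 * Real.pi) :
    Set.InjOn (fun θ : ℝ => Complex.exp (-(θ : ℂ) * Complex.I)) (Set.Ico a b) := by
  intro θ hθ φ hφ heq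
  simp only [neg_mul, Complex.exp_neg, _root_.inv_inj] at heq
  exact Circle.exp_injOn_Ico h hθ hφ (Circle.ext heq)

theorem SchurStable.isUnit_one_sub_smul {n : ℕ} {A : Matrix (Fin n) (Fin n) ℂ}
    (hA : SchurStable A) {z : ℂ} (hz : ‖z‖ ≤ 1) : IsUnit (1 - z • A) := by
  rcases eq_or_ne z 0 with rfl | hz0
  · simp
  refine isUnit_one_sub_smul_of_inv_notMem_spectrum hz0 fun hmem => ?_
  have hlt : ‖z‖⁻¹ < 1 := norm_inv z ▸ hA _ hmem
  have hge : 1 ≤ ‖z‖⁻¹ := (one_le_inv₀ (norm_pos_iff.mpr hz0)).mpr hz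
  linarith

theorem stmt0 {n m : ℕ} (A : Matrix (Fin n) (Fin n) ℂ) (b : Fin n → ℂ)
    (hA : SchurStable A) (hreach : Reachable A b) (hm : m ≤ n)
    (θ : Fin m → ℝ) (hθ : ∀ k, θ k ∈ Set.Ico (0 : ℝ) (2 * Real.pi))
    (hinj : Function.Injective θ) :
    LinearIndependent ℂ (fun k : Fin m => Gv A b (θ k)) := by
  have hkrylov : LinearIndependent ℂ fun k : Fin n => A ^ (k : ℕ) *ᵥ b :=
    linearIndependent_of_top_le_span_of_card_eq_finrank hreach.ge (by simp)
  set z : Fin m → ℂ := fun k => Complex.exp (-(θ k : ℂ) * Complex.I)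
  have hz_norm : ∀ k, ‖z k‖ = 1 := fun k => by
    simpa [z, neg_mul] using Complex.norm_exp_ofReal_mul_I (-θ k)
  have hz : Function.Injective z := fun j k h =>
    hinj (injOn_exp_neg_mul_I_Ico (by simp) (hθ j) (hθ k) h)
  exact linearIndependent_inv_one_sub_smul_mulVec hkrylov hz
    (fun k => Complex.exp_ne_zero _)
    (fun k => hA.isUnit_one_sub_smul (hz_norm k).le) (by simpa using hm)
end

section
/- Let x = Σ_{k=1}^m G(θ_k) c_k with c_k ∈ ℂ nonzero and θ_k pairwise distinct. Define τ = Σ_k |c_k| ‖G(θ_k)‖ and Σ = Σ_k (|c_k|/‖G(θ_k)‖) G(θ_k) G(θ_k)*. Then trace(Σ) = τ and the block matrix [[τ, x*],[x, Σ]] is positive semidefinite. -/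
open Matrix
open scoped ComplexOrder

/-- Euclidean norm on ℂⁿ. -/
noncomputable def enormEuc {n : ℕ} (v : Fin n → ℂ) : ℝ :=
  Real.sqrt (∑ i, Complex.normSq (v i))

/-- The block matrix [[τ, x*],[x, Σ]]. -/
def blockM {n : ℕ} (τ : ℝ) (x : Fin n → ℂ) (S : Matrix (Fin n) (Fin n) ℂ) :
    Matrix (Unit ⊕ Fin n) (Unit ⊕ Fin n) ℂ :=
  Matrix.fromBlocks (Matrix.of fun _ _ => (τ : ℂ)) (Matrix.of fun _ j => star (x j))
    (Matrix.of fun i _ => x i) S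

/-!
Each atom contributes the block `[[|c| ‖g‖, (c g)*], [c g, (|c| / ‖g‖) g g*]]`, which equals
`(|c| / ‖g‖) w w*` for `w = (c̄ ‖g‖ / |c|, g)`, a positive semidefinite rank-one matrix. The block
matrix is additive in `(τ, x, Σ)`, so it is a sum of such blocks; the trace identity is
`tr ((|c| / ‖g‖) g g*) = (|c| / ‖g‖) ‖g‖² = |c| ‖g‖` summed over the atoms.
When `c = 0` or `g = 0` the atom's block is zero, since division by zero gives `0`.
-/

open Finset

lemma enormEuc_sq {n : ℕ} (v : Fin n → ℂ) : (enormEuc v : ℂ) ^ 2 = v ⬝ᵥ star v := by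
  rw [← Complex.ofReal_pow, enormEuc,
    Real.sq_sqrt (sum_nonneg fun i _ => Complex.normSq_nonneg (v i))]
  push_cast
  exact sum_congr rfl fun i _ => (Complex.mul_conj (v i)).symm

lemma enormEuc_nonneg {n : ℕ} (v : Fin n → ℂ) : 0 ≤ enormEuc v := Real.sqrt_nonneg _

lemma enormEuc_eq_zero_iff {n : ℕ} {v : Fin n → ℂ} : enormEuc v = 0 ↔ v = 0 := by
  rw [← dotProduct_self_star_eq_zero, ← enormEuc_sq, pow_eq_zero_iff two_ne_zero,
    Complex.ofReal_eq_zero]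

lemma trace_smul_vecMulVec_star {n : ℕ} (t : ℝ) (g : Fin n → ℂ) :
    (((t / enormEuc g : ℝ) : ℂ) • vecMulVec g (star g)).trace = (t * enormEuc g : ℝ) := by
  rw [trace_smul, trace_vecMulVec, ← enormEuc_sq, smul_eq_mul]
  rcases eq_or_ne (enormEuc g) 0 with h | h
  · simp [h]
  · push_cast
    field_simp

@[simp]
lemma blockM_zero {n : ℕ} : blockM 0 (0 : Fin n → ℂ) 0 = 0 := by
  ext (i | i) (j | j) <;> simp [blockM]

lemma blockM_add {n : ℕ} (τ₁ τ₂ : ℝ) (x₁ x₂ : Fin n → ℂ) (S₁ S₂ : Matrix (Fin n) (Fin n) ℂ) :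
    blockM (τ₁ + τ₂) (x₁ + x₂) (S₁ + S₂) = blockM τ₁ x₁ S₁ + blockM τ₂ x₂ S₂ := by
  ext (i | i) (j | j) <;> simp [blockM]

lemma blockM_sum {n : ℕ} {ι : Type*} (s : Finset ι) (τ : ι → ℝ) (x : ι → Fin n → ℂ)
    (S : ι → Matrix (Fin n) (Fin n) ℂ) :
    blockM (∑ k ∈ s, τ k) (∑ k ∈ s, x k) (∑ k ∈ s, S k) = ∑ k ∈ s, blockM (τ k) (x k) (S k) := by
  induction s using Finset.cons_induction with
  | empty => simp
  | cons k s hk ih => simp only [sum_cons, blockM_add, ih]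

lemma blockM_atom_eq_smul_vecMulVec {n : ℕ} {c : ℂ} (hc : c ≠ 0) {g : Fin n → ℂ}
    (hg : g ≠ 0) :
    let w : Unit ⊕ Fin n → ℂ := Sum.elim (fun _ => star c * enormEuc g / ‖c‖) g
    blockM (‖c‖ * enormEuc g) (c • g) (((‖c‖ / enormEuc g : ℝ) : ℂ) • vecMulVec g (star g)) =
      ((‖c‖ / enormEuc g : ℝ) : ℂ) • vecMulVec w (star w) := by
  have hr : (enormEuc g : ℂ) ≠ 0 := by exact_mod_cast mt enormEuc_eq_zero_iff.mp hg
  have hc' : (‖c‖ : ℂ) ≠ 0 := by exact_mod_cast norm_ne_zero_iff.mpr hc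
  ext (i | i) (j | j) <;>
    simp only [blockM, fromBlocks_apply₁₁, fromBlocks_apply₁₂, fromBlocks_apply₂₁,
      fromBlocks_apply₂₂, of_apply, Matrix.smul_apply, vecMulVec_apply, Pi.smul_apply,
      Pi.star_apply, Sum.elim_inl, Sum.elim_inr, smul_eq_mul, star_mul', star_div₀,
      RCLike.star_def, Complex.ofReal_mul, Complex.ofReal_div, Complex.conj_ofReal,
      RingHomCompTriple.comp_apply, RingHom.id_apply]
  · field_simp
    exact (Complex.conj_mul' c).symm
  · field_simp
  · field_simp

lemma posSemidef_blockM_atom {n : ℕ} (c : ℂ) (g : Fin n → ℂ) :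
    (blockM (‖c‖ * enormEuc g) (c • g)
      (((‖c‖ / enormEuc g : ℝ) : ℂ) • vecMulVec g (star g))).PosSemidef := by
  rcases eq_or_ne c 0 with rfl | hc
  · simpa using PosSemidef.zero
  rcases eq_or_ne g 0 with rfl | hg
  · simpa [enormEuc_eq_zero_iff.mpr rfl] using PosSemidef.zero
  rw [blockM_atom_eq_smul_vecMulVec hc hg]
  exact (posSemidef_vecMulVec_self_star _).smul
    (Complex.zero_le_real.mpr (div_nonneg (norm_nonneg c) (enormEuc_nonneg g)))

theorem stmt4_general {n m : ℕ} (A : Matrix (Fin n) (Fin n) ℂ) (b : Fin n → ℂ)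
    (θ : Fin m → ℝ)
    (c : Fin m → ℂ)
    (x : Fin n → ℂ) (hx : x = ∑ k, c k • Gv A b (θ k))
    (τ : ℝ) (hτ : τ = ∑ k, ‖c k‖ * enormEuc (Gv A b (θ k)))
    (S : Matrix (Fin n) (Fin n) ℂ)
    (hS : S = ∑ k, ((‖c k‖ / enormEuc (Gv A b (θ k)) : ℝ) : ℂ) •
      vecMulVec (Gv A b (θ k)) (star (Gv A b (θ k)))) :
    S.trace = (τ : ℂ) ∧ (blockM τ x S).PosSemidef := by
  subst hx hτ hS
  constructor
  · rw [trace_sum, Complex.ofReal_sum]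
    exact sum_congr rfl fun k _ => trace_smul_vecMulVec_star _ _
  · rw [blockM_sum]
    exact posSemidef_sum _ fun k _ => posSemidef_blockM_atom _ _

theorem stmt4 {n m : ℕ} (A : Matrix (Fin n) (Fin n) ℂ) (b : Fin n → ℂ)
    (θ : Fin m → ℝ) (hθ : Function.Injective θ)
    (hGne : ∀ k, Gv A b (θ k) ≠ 0)
    (c : Fin m → ℂ) (hc : ∀ k, c k ≠ 0)
    (x : Fin n → ℂ) (hx : x = ∑ k, c k • Gv A b (θ k))
    (τ : ℝ) (hτ : τ = ∑ k, ‖c k‖ * enormEuc (Gv A b (θ k)))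
    (S : Matrix (Fin n) (Fin n) ℂ)
    (hS : S = ∑ k, ((‖c k‖ / enormEuc (Gv A b (θ k)) : ℝ) : ℂ) •
      vecMulVec (Gv A b (θ k)) (star (Gv A b (θ k)))) :
    S.trace = (τ : ℂ) ∧ (blockM τ x S).PosSemidef :=
  stmt4_general A b θ c x hx τ hτ S hS
end

section
/- Let A be the n×n nilpotent upper-shift companion matrix (ones on the superdiagonal, zeros elsewhere) and b = e_n the last standard basis vector. Then a Hermitian matrix Σ belongs to range Γ (i.e., Σ = (1/2π)∫G(θ)dμ(θ)G(θ)* for some signed measure dμ, where G(θ) = (I−e^{−iθ}A)^{−1}b) if and only if Σ is a Hermitian Toeplitz matrix. -/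
open Matrix MeasureTheory

/-- Membership in the range of Γ : signed measures → Hermitian matrices,
Γ(dμ) = (1/2π) ∫ G(θ) dμ(θ) G(θ)*, via Jordan decomposition dμ = dμ₊ − dμ₋. -/
def inRangeGamma {n : ℕ} (A : Matrix (Fin n) (Fin n) ℂ) (b : Fin n → ℂ)
    (S : Matrix (Fin n) (Fin n) ℂ) : Prop :=
  ∃ (μ ν : Measure ℝ), IsFiniteMeasure μ ∧ IsFiniteMeasure ν ∧
    ∀ i j, S i j = (1 / (2 * Real.pi) : ℝ) *
      ((∫ θ in Set.Ico (0 : ℝ) (2 * Real.pi), Gv A b θ i * star (Gv A b θ j) ∂μ)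
        - ∫ θ in Set.Ico (0 : ℝ) (2 * Real.pi), Gv A b θ i * star (Gv A b θ j) ∂ν)

/-- The matrix is Toeplitz: entries depend only on the difference of the indices. -/
def IsToeplitz {n : ℕ} (S : Matrix (Fin n) (Fin n) ℂ) : Prop :=
  ∀ i j k l : Fin n, (i : ℤ) - (j : ℤ) = (k : ℤ) - (l : ℤ) → S i j = S k l


/-!
With `z = e^{-iθ}`, the shift `A` is nilpotent and `G(θ) = (I - zA)⁻¹ e_n` has entries
`G_k = z^{n-1-k}`, so `G_j conj(G_k) = e^{i(j-k)θ}` depends only on `j - k`: every matrix in the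
range of `Γ` is Toeplitz. Conversely, let `S_{jk} = c_{j-k}` with `c_{-d} = conj(c_d)`. On the
`N = 2n - 1` equally spaced nodes `θ_t = 2πt/N` put the weights
`w_t = (2π/N) ∑_{|d|<n} c_d e^{-idθ_t}`, which are real by the symmetry of `c`. Orthogonality of
the `N`-th roots of unity (all differences `m - d` have `|m - d| ≤ 2n - 2 < N`) gives
`∑_t w_t e^{imθ_t} = 2π c_m` for `|m| < n`, and the positive and negative parts of `w` are the
two finite measures.
-/

open Complex Real

section Shift

variable {R : Type*} [CommRing R] {n : ℕ}

lemma shift_mulVec_apply {A : Matrix (Fin n) (Fin n) R}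
    (hA : A = Matrix.of fun i j : Fin n => if (j : ℕ) = (i : ℕ) + 1 then (1 : R) else 0)
    (v : Fin n → R) (i : Fin n) :
    (A *ᵥ v) i = if h : (i : ℕ) + 1 < n then v ⟨i + 1, h⟩ else 0 := by
  subst hA
  simp only [mulVec, dotProduct, of_apply, ite_mul, one_mul, zero_mul]
  split_ifs with h
  · rw [Fintype.sum_eq_single ⟨i + 1, h⟩ fun j hj => if_neg fun hj' => hj (Fin.ext hj'), if_pos rfl]
  · exact Finset.sum_eq_zero fun j _ => if_neg (by omega)

lemma inv_one_sub_smul_shift_mulVec {A : Matrix (Fin n) (Fin n) R} {b : Fin n → R}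
    (hA : A = Matrix.of fun i j : Fin n => if (j : ℕ) = (i : ℕ) + 1 then (1 : R) else 0)
    (hb : b = fun i : Fin n => if (i : ℕ) = n - 1 then (1 : R) else 0) (z : R) :
    (1 - z • A)⁻¹ *ᵥ b = fun i : Fin n => z ^ (n - 1 - (i : ℕ)) := by
  have hdet : (1 - z • A).det = 1 := by
    have hupper : (1 - z • A).BlockTriangular id := fun i j (hji : j < i) => by
      have : (j : ℕ) ≠ i + 1 := by omega
      simp [hA, Matrix.one_apply_ne hji.ne', this]
    rw [det_of_isUpperTriangular hupper]
    exact Finset.prod_eq_one fun i _ => by simp [hA]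
  have hsolve : (1 - z • A) *ᵥ (fun i : Fin n => z ^ (n - 1 - (i : ℕ))) = b := by
    ext i
    rw [sub_mulVec, one_mulVec, smul_mulVec, Pi.sub_apply, Pi.smul_apply, shift_mulVec_apply hA,
      hb]
    dsimp only
    by_cases h : (i : ℕ) + 1 < n
    · rw [dif_pos h, if_neg (by omega), smul_eq_mul, ← pow_succ',
        show n - 1 - ((i : ℕ) + 1) + 1 = n - 1 - i by omega, sub_self]
    · rw [dif_neg h, if_pos (by omega), smul_zero, sub_zero, show n - 1 - i = 0 by omega,
        pow_zero]
  rw [← hsolve, mulVec_mulVec, nonsing_inv_mul _ (by simp [hdet]), one_mulVec]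

lemma Gv_mul_star_of_shift {A : Matrix (Fin n) (Fin n) ℂ} {b : Fin n → ℂ}
    (hA : A = Matrix.of fun i j : Fin n => if (j : ℕ) = (i : ℕ) + 1 then (1 : ℂ) else 0)
    (hb : b = fun i : Fin n => if (i : ℕ) = n - 1 then (1 : ℂ) else 0) (θ : ℝ) (i j : Fin n) :
    Gv A b θ i * star (Gv A b θ j) = cexp (θ * I) ^ ((i : ℤ) - j) := by
  have hexp : cexp (-θ * I) = (cexp (θ * I))⁻¹ := by rw [neg_mul, Complex.exp_neg]
  have hstar : star (cexp (θ * I))⁻¹ = cexp (θ * I) := by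
    rw [← hexp, Complex.star_def, ← Complex.exp_conj]
    simp
  simp only [Gv, inv_one_sub_smul_shift_mulVec hA hb, hexp, star_pow, hstar]
  rw [inv_pow, ← zpow_natCast, ← zpow_natCast, ← _root_.zpow_neg,
    ← zpow_add₀ (Complex.exp_ne_zero _)]
  congr 1
  omega

end Shift

lemma sum_exp_two_pi_mul_I_zpow {N : ℕ} {m : ℤ} (hm : m.natAbs < N) :
    ∑ t : Fin N, cexp (((2 * π * t / N : ℝ) : ℂ) * I) ^ m = if m = 0 then (N : ℂ) else 0 := by
  have hN : N ≠ 0 := by omega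
  set ζ := cexp (2 * π * I / N)
  have hζ : IsPrimitiveRoot ζ N := isPrimitiveRoot_exp N hN
  have hnode : ∀ t : Fin N, cexp (((2 * π * t / N : ℝ) : ℂ) * I) ^ m = (ζ ^ m) ^ (t : ℕ) := by
    intro t
    have hpow : cexp (((2 * π * t / N : ℝ) : ℂ) * I) = ζ ^ (t : ℕ) := by
      rw [← Complex.exp_nat_mul]
      congr 1
      push_cast
      ring
    rw [hpow, ← zpow_natCast, ← _root_.zpow_mul, mul_comm, _root_.zpow_mul, zpow_natCast]
  simp_rw [hnode]
  rw [Fin.sum_univ_eq_sum_range (fun t => (ζ ^ m) ^ t)]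
  split_ifs with hm0
  · simp [hm0]
  · have hne : ζ ^ m ≠ 1 := by
      rw [Ne, hζ.zpow_eq_one_iff_dvd]
      exact fun hdvd => hm0 (Int.eq_zero_of_dvd_of_natAbs_lt_natAbs hdvd (by simpa using hm))
    rw [geom_sum_eq hne, ← zpow_natCast, ← _root_.zpow_mul, mul_comm, _root_.zpow_mul, zpow_natCast,
      hζ.pow_eq_one, _root_.one_zpow, sub_self, zero_div]

section DiracCombination

variable {α E ι : Type*} [MeasurableSpace α] [MeasurableSingletonClass α]
  [NormedAddCommGroup E] [NormedSpace ℝ E] [CompleteSpace E]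

lemma setIntegral_sum_smul_dirac (s : Finset ι) (w : ι → NNReal) (x : ι → α) {S : Set α}
    (hx : ∀ i ∈ s, x i ∈ S) (f : α → E) :
    ∫ a in S, f a ∂(∑ i ∈ s, w i • Measure.dirac (x i)) = ∑ i ∈ s, (w i : ℝ) • f (x i) := by
  classical
  rw [← Measure.restrictₗ_apply S, map_sum, integral_finsetSum_measure]
  · refine Finset.sum_congr rfl fun i hi => ?_
    rw [Measure.restrictₗ_apply, Measure.restrict_smul, restrict_dirac, if_pos (hx i hi),
      integral_smul_nnreal_measure, integral_dirac, NNReal.smul_def]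
  · intro i hi
    rw [Measure.restrictₗ_apply, Measure.restrict_smul, restrict_dirac, if_pos (hx i hi)]
    exact (integrable_dirac enorm_lt_top).smul_measure_nnreal

lemma setIntegral_sum_toNNReal_smul_dirac_sub (s : Finset ι) (w : ι → ℝ) (x : ι → α) {S : Set α}
    (hx : ∀ i ∈ s, x i ∈ S) (f : α → E) :
    ∫ a in S, f a ∂(∑ i ∈ s, (w i).toNNReal • Measure.dirac (x i))
      - ∫ a in S, f a ∂(∑ i ∈ s, (-w i).toNNReal • Measure.dirac (x i))
      = ∑ i ∈ s, w i • f (x i) := by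
  rw [setIntegral_sum_smul_dirac s _ x hx, setIntegral_sum_smul_dirac s _ x hx,
    ← Finset.sum_sub_distrib]
  simp_rw [← sub_smul, Real.coe_toNNReal', max_zero_sub_max_neg_zero_eq_self]

end DiracCombination

lemma sum_sum_mul_exp_zpow_mul_exp_zpow {N : ℕ} {D : Finset ℤ} (c : ℤ → ℂ) {m : ℤ} (hm : m ∈ D)
    (hD : ∀ d ∈ D, (m - d).natAbs < N) :
    ∑ t : Fin N, (∑ d ∈ D, c d * cexp (((2 * π * t / N : ℝ) : ℂ) * I) ^ (-d))
      * cexp (((2 * π * t / N : ℝ) : ℂ) * I) ^ m = N * c m := by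
  simp_rw [Finset.sum_mul, mul_assoc (c _), ← zpow_add₀ (Complex.exp_ne_zero _), neg_add_eq_sub]
  rw [Finset.sum_comm]
  simp_rw [← Finset.mul_sum]
  rw [Finset.sum_eq_single_of_mem m hm]
  · rw [sum_exp_two_pi_mul_I_zpow (hD m hm), sub_self, if_pos rfl, mul_comm]
  · intro d hd hdm
    rw [sum_exp_two_pi_mul_I_zpow (hD d hd), if_neg (sub_ne_zero.mpr hdm.symm), mul_zero]

lemma star_sum_mul_exp_zpow_neg {n : ℕ} {c : ℤ → ℂ}
    (hc : ∀ d : ℤ, d.natAbs < n → star (c d) = c (-d)) (x : ℝ) :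
    star (∑ d ∈ Finset.Ioo (-(n : ℤ)) n, c d * cexp (x * I) ^ (-d))
      = ∑ d ∈ Finset.Ioo (-(n : ℤ)) n, c d * cexp (x * I) ^ (-d) := by
  have hstar : star (cexp (x * I)) = (cexp (x * I))⁻¹ := by
    rw [Complex.star_def, ← Complex.exp_conj, ← Complex.exp_neg]
    simp
  rw [star_sum]
  refine Finset.sum_nbij' Neg.neg Neg.neg ?_ ?_ (fun _ _ => neg_neg _) (fun _ _ => neg_neg _) ?_
  · intro d hd
    simp only [Finset.mem_Ioo] at hd ⊢
    omega
  · intro d hd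
    simp only [Finset.mem_Ioo] at hd ⊢
    omega
  · intro d hd
    rw [Finset.mem_Ioo] at hd
    rw [star_mul', hc d (by omega), star_zpow₀, hstar, _root_.inv_zpow', neg_neg]

theorem exists_isFiniteMeasure_trigonometric_moments {n : ℕ} {c : ℤ → ℂ}
    (hc : ∀ d : ℤ, d.natAbs < n → star (c d) = c (-d)) :
    ∃ μ ν : Measure ℝ, IsFiniteMeasure μ ∧ IsFiniteMeasure ν ∧ ∀ m : ℤ, m.natAbs < n →
      c m = (1 / (2 * π) : ℝ) *
        ((∫ θ in Set.Ico (0 : ℝ) (2 * π), cexp (θ * I) ^ m ∂μ)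
          - ∫ θ in Set.Ico (0 : ℝ) (2 * π), cexp (θ * I) ^ m ∂ν) := by
  let N := 2 * n - 1
  let D := Finset.Ioo (-(n : ℤ)) n
  let node : Fin N → ℝ := fun t => 2 * π * t / N
  let p : Fin N → ℂ := fun t => ∑ d ∈ D, c d * cexp (node t * I) ^ (-d)
  let w : Fin N → ℝ := fun t => 2 * π / N * (p t).re
  have hnode : ∀ t, node t ∈ Set.Ico 0 (2 * π) := by
    intro t
    have hN : (0 : ℝ) < N := by exact_mod_cast t.pos
    have ht : (t : ℝ) < N := by exact_mod_cast t.isLt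
    refine ⟨by positivity, ?_⟩
    rw [div_lt_iff₀ hN]
    nlinarith [Real.pi_pos]
  have hp : ∀ t, ((p t).re : ℂ) = p t := fun t =>
    Complex.conj_eq_iff_re.mp (star_sum_mul_exp_zpow_neg hc _)
  have hmoment : ∀ m : ℤ, m.natAbs < n → ∑ t, p t * cexp (node t * I) ^ m = N * c m :=
    fun m hm => sum_sum_mul_exp_zpow_mul_exp_zpow c (by simp [D]; omega)
      (fun d hd => by simp [D] at hd; omega)
  refine ⟨∑ t, (w t).toNNReal • Measure.dirac (node t),
    ∑ t, (-w t).toNNReal • Measure.dirac (node t), inferInstance, inferInstance, fun m hm => ?_⟩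
  rw [setIntegral_sum_toNNReal_smul_dirac_sub _ w node (fun t _ => hnode t)]
  simp_rw [Complex.real_smul, w, Complex.ofReal_mul, hp, mul_assoc, ← Finset.mul_sum, hmoment m hm]
  have hN : (N : ℂ) ≠ 0 := by norm_cast; omega
  push_cast
  field_simp

lemma IsToeplitz.exists_eq_sub {n : ℕ} {S : Matrix (Fin n) (Fin n) ℂ} (hS : IsToeplitz S) :
    ∃ c : ℤ → ℂ, ∀ i j : Fin n, S i j = c (i - j) := by
  classical
  refine ⟨fun d => if h : ∃ p : Fin n × Fin n, (p.1 : ℤ) - p.2 = d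
    then S h.choose.1 h.choose.2 else 0, fun i j => ?_⟩
  have h : ∃ p : Fin n × Fin n, (p.1 : ℤ) - p.2 = i - j := ⟨(i, j), rfl⟩
  dsimp only
  rw [dif_pos h]
  exact hS _ _ _ _ h.choose_spec.symm

lemma Matrix.IsHermitian.star_eq_neg_of_eq_sub {n : ℕ} {S : Matrix (Fin n) (Fin n) ℂ}
    (hS : S.IsHermitian) {c : ℤ → ℂ} (hc : ∀ i j : Fin n, S i j = c (i - j)) (d : ℤ)
    (hd : d.natAbs < n) : star (c d) = c (-d) := by
  let i : Fin n := ⟨d.toNat, by omega⟩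
  let j : Fin n := ⟨(-d).toNat, by omega⟩
  have hij : (i : ℤ) - j = d := Int.toNat_sub_toNat_neg d
  rw [← hij, ← hc, neg_sub, ← hc, hS.apply]

theorem stmt10_general {n : ℕ}
    (A : Matrix (Fin n) (Fin n) ℂ)
    (hA : A = Matrix.of fun i j : Fin n => if (j : ℕ) = (i : ℕ) + 1 then (1 : ℂ) else 0)
    (b : Fin n → ℂ) (hb : b = fun i : Fin n => if (i : ℕ) = n - 1 then (1 : ℂ) else 0)
    (S : Matrix (Fin n) (Fin n) ℂ) (hS : S.IsHermitian) :
    inRangeGamma A b S ↔ IsToeplitz S := by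
  simp only [inRangeGamma, Gv_mul_star_of_shift hA hb]
  constructor
  · rintro ⟨μ, ν, -, -, hΓ⟩ i j k l hijkl
    rw [hΓ, hΓ, hijkl]
  · intro hT
    obtain ⟨c, hc⟩ := hT.exists_eq_sub
    obtain ⟨μ, ν, hμ, hν, hmoment⟩ :=
      exists_isFiniteMeasure_trigonometric_moments (hS.star_eq_neg_of_eq_sub hc)
    exact ⟨μ, ν, hμ, hν, fun i j => by rw [hc, hmoment _ (by omega)]⟩

theorem stmt10 {n : ℕ} (hn : 0 < n)
    (A : Matrix (Fin n) (Fin n) ℂ)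
    (hA : A = Matrix.of fun i j : Fin n => if (j : ℕ) = (i : ℕ) + 1 then (1 : ℂ) else 0)
    (b : Fin n → ℂ) (hb : b = fun i : Fin n => if (i : ℕ) = n - 1 then (1 : ℂ) else 0)
    (S : Matrix (Fin n) (Fin n) ℂ) (hS : S.IsHermitian) :
    inRangeGamma A b S ↔ IsToeplitz S :=
  stmt10_general A hA b hb S hS
end

section
/- Suppose Σ ∈ range Γ, i.e., Σ = (1/2π)∫ G(θ) dμ(θ) G(θ)* for a signed measure dμ, where G(θ) = (I − e^{−iθ}A)^{−1}b. Then there exists h ∈ ℂⁿ such that Σ − AΣA* = b h* + h b*. -/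
open Matrix MeasureTheory

/-!
Writing `G = b + e^{-iθ} A G` and using `|e^{-iθ}| = 1`, the rank-one matrices satisfy
`G G* - (A G)(A G)* = b G* + G b* - b b*` for every `θ`. Integrating against each half of the
Jordan decomposition of `dμ` gives
`Σ - A Σ A* = b m* + m b* - c b b*` with `m = (1/2π) ∫ G dμ` and `c = (1/2π) ∫ dμ`,
so `h = m - (c/2) b` works.
-/

theorem vecMulVec_add_smul_sub_vecMulVec {R n : Type*} [CommRing R] [StarRing R] (b v : n → R)
    {α : R} (hα : star α * α = 1) :
    vecMulVec (b + α • v) (star (b + α • v)) - vecMulVec v (star v) =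
      vecMulVec b (star (b + α • v)) + vecMulVec (b + α • v) (star b) - vecMulVec b (star b) := by
  ext i j
  simp only [Matrix.sub_apply, Matrix.add_apply, vecMulVec_apply, Pi.add_apply, Pi.smul_apply,
    Pi.star_apply, smul_eq_mul, star_add, star_mul']
  linear_combination (v i * star (v j)) * hα

theorem mulVec_mul_star_mulVec {R m n : Type*} [CommRing R] [StarRing R] [Fintype n]
    (A : Matrix m n R) (v : n → R) (i j : m) :
    (A *ᵥ v) i * star ((A *ᵥ v) j) = ∑ k, ∑ l, A i k * star (A j l) * (v k * star (v l)) := by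
  simp only [mulVec, dotProduct, star_sum, star_mul', Finset.sum_mul_sum]
  exact Finset.sum_congr rfl fun k _ => Finset.sum_congr rfl fun l _ => by ring

section GramIntegral

variable {X 𝕜 n : Type*} [MeasurableSpace X] [RCLike 𝕜] [Fintype n]

/-- `∫ g g* dκ`, taken entrywise: `Matrix` carries no global normed structure. -/
noncomputable def gramIntegral (κ : Measure X) (g : X → n → 𝕜) : Matrix n n 𝕜 :=
  of fun i j => ∫ x, g x i * star (g x j) ∂κ

variable {κ : Measure X} {g : X → n → 𝕜}

theorem integrable_mulVec_mul_star_mulVec {m : Type*} (A : Matrix m n 𝕜)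
    (hg : ∀ k l, Integrable (fun x => g x k * star (g x l)) κ) (i j : m) :
    Integrable (fun x => (A *ᵥ g x) i * star ((A *ᵥ g x) j)) κ := by
  simp only [mulVec_mul_star_mulVec]
  exact integrable_finsetSum _ fun k _ => integrable_finsetSum _ fun l _ =>
    (hg k l).const_mul _

theorem mul_gramIntegral_mul_conjTranspose {m : Type*} [Fintype m] (A : Matrix m n 𝕜)
    (hg : ∀ k l, Integrable (fun x => g x k * star (g x l)) κ) :
    A * gramIntegral κ g * Aᴴ = gramIntegral κ (fun x => A *ᵥ g x) := by
  ext i j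
  simp only [gramIntegral, of_apply, mul_apply, conjTranspose_apply, mulVec_mul_star_mulVec]
  rw [integral_finsetSum _ fun k _ => integrable_finsetSum _ fun l _ => (hg k l).const_mul _]
  simp only [integral_finsetSum _ fun l _ => (hg _ l).const_mul _, integral_const_mul,
    Finset.sum_mul]
  rw [Finset.sum_comm]
  exact Finset.sum_congr rfl fun k _ => Finset.sum_congr rfl fun l _ => by ring

theorem gramIntegral_sub_mul_gramIntegral_mul_conjTranspose [IsFiniteMeasure κ]
    (A : Matrix n n 𝕜) (b : n → 𝕜) {α : X → 𝕜} (hα : ∀ x, ‖α x‖ = 1)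
    (hgb : ∀ x, g x = b + α x • A *ᵥ g x) (hg : ∀ k, Integrable (fun x => g x k) κ)
    (hgg : ∀ k l, Integrable (fun x => g x k * star (g x l)) κ) :
    gramIntegral κ g - A * gramIntegral κ g * Aᴴ =
      vecMulVec b (star fun i => ∫ x, g x i ∂κ) + vecMulVec (fun i => ∫ x, g x i ∂κ) (star b)
        - κ.real Set.univ • vecMulVec b (star b) := by
  rw [mul_gramIntegral_mul_conjTranspose A hgg]
  ext i j
  have hpoint : ∀ x, g x i * star (g x j) - (A *ᵥ g x) i * star ((A *ᵥ g x) j) =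
      b i * star (g x j) + g x i * star (b j) - b i * star (b j) := fun x => by
    have hαx : star (α x) * α x = 1 := by
      rw [RCLike.star_def, RCLike.conj_mul, hα x]
      simp
    have := congrFun₂ (vecMulVec_add_smul_sub_vecMulVec b (A *ᵥ g x) hαx) i j
    rwa [← hgb x] at this
  have hstar : Integrable (fun x => star (g x j)) κ :=
    memLp_one_iff_integrable.mp (memLp_one_iff_integrable.mpr (hg j)).star
  have hconj : ∫ x, star (g x j) ∂κ = star (∫ x, g x j ∂κ) := integral_conj
  simp only [gramIntegral, Matrix.sub_apply, Matrix.add_apply, of_apply, vecMulVec_apply,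
    Matrix.smul_apply, Pi.star_apply]
  rw [← integral_sub (hgg i j) (integrable_mulVec_mul_star_mulVec A hgg i j)]
  simp only [hpoint]
  rw [integral_sub (f := fun x => b i * star (g x j) + g x i * star (b j))
      ((hstar.const_mul _).add ((hg i).mul_const _)) (integrable_const _),
    integral_add (hstar.const_mul _) ((hg i).mul_const _), integral_const_mul,
    integral_mul_const, integral_const, hconj]

end GramIntegral

theorem isUnit_one_sub_smul_of_schurStable {n : ℕ} {A : Matrix (Fin n) (Fin n) ℂ}
    (hA : SchurStable A) {α : ℂ} (hα : ‖α‖ ≤ 1) : IsUnit (1 - α • A) := by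
  rcases eq_or_ne α 0 with rfl | hα0
  · simp
  have hspec : α⁻¹ ∉ spectrum ℂ A := fun h => by
    have := hA _ h
    rw [norm_inv] at this
    exact this.not_ge ((one_le_inv₀ (norm_pos_iff.mpr hα0)).mpr hα)
  have hfactor : 1 - α • A = algebraMap ℂ _ α * (algebraMap ℂ _ α⁻¹ - A) := by
    rw [mul_sub, ← map_mul, mul_inv_cancel₀ hα0, map_one, Algebra.algebraMap_eq_smul_one,
      smul_mul_assoc, one_mul]
  rw [hfactor]
  exact ((isUnit_iff_ne_zero.mpr hα0).map _).mul (spectrum.notMem_iff.mp hspec)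

section Resolvent

variable {n : ℕ} {A : Matrix (Fin n) (Fin n) ℂ} (b : Fin n → ℂ) (hA : SchurStable A)
include hA

theorem isUnit_det_one_sub_exp_smul (θ : ℝ) :
    IsUnit (1 - Complex.exp (-(θ : ℂ) * Complex.I) • A).det := by
  rw [← isUnit_iff_isUnit_det]
  refine isUnit_one_sub_smul_of_schurStable hA (le_of_eq ?_)
  rw [Complex.norm_exp]
  simp

theorem Gv_eq_add_smul_mulVec (θ : ℝ) :
    Gv A b θ = b + Complex.exp (-(θ : ℂ) * Complex.I) • A *ᵥ Gv A b θ := by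
  have hres : (1 - Complex.exp (-(θ : ℂ) * Complex.I) • A) *ᵥ Gv A b θ = b := by
    rw [Gv, mulVec_mulVec, mul_nonsing_inv _ (isUnit_det_one_sub_exp_smul hA θ), one_mulVec]
  rw [sub_mulVec, one_mulVec, smul_mulVec] at hres
  exact sub_eq_iff_eq_add.mp hres

theorem continuous_Gv : Continuous (Gv A b) := by
  have hM : Continuous fun θ : ℝ => 1 - Complex.exp (-(θ : ℂ) * Complex.I) • A := by fun_prop
  have hinv : Continuous fun θ : ℝ => (1 - Complex.exp (-(θ : ℂ) * Complex.I) • A)⁻¹ :=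
    continuous_iff_continuousAt.mpr fun θ =>
      (continuousAt_matrix_inv _ (by
        rw [Ring.inverse_eq_inv']
        exact continuousAt_inv₀ (isUnit_det_one_sub_exp_smul hA θ).ne_zero)).comp hM.continuousAt
  exact hinv.matrix_mulVec continuous_const

theorem gramIntegral_Gv_sub_mul_gramIntegral_Gv_mul_conjTranspose (κ : Measure ℝ)
    [IsLocallyFiniteMeasure κ] (s t : ℝ) :
    gramIntegral (κ.restrict (Set.Ico s t)) (Gv A b)
        - A * gramIntegral (κ.restrict (Set.Ico s t)) (Gv A b) * Aᴴ =
      vecMulVec b (star fun i => ∫ θ in Set.Ico s t, Gv A b θ i ∂κ)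
        + vecMulVec (fun i => ∫ θ in Set.Ico s t, Gv A b θ i ∂κ) (star b)
        - κ.real (Set.Ico s t) • vecMulVec b (star b) := by
  have : IsFiniteMeasure (κ.restrict (Set.Ico s t)) :=
    isFiniteMeasure_restrict.mpr measure_Ico_lt_top.ne
  have hint : ∀ f : ℝ → ℂ, Continuous f → IntegrableOn f (Set.Ico s t) κ := fun f hf =>
    hf.integrableOn_Icc.mono_set Set.Ico_subset_Icc_self
  have hG : ∀ k, Continuous fun θ => Gv A b θ k := fun k =>
    (continuous_apply k).comp (continuous_Gv b hA)
  rw [gramIntegral_sub_mul_gramIntegral_mul_conjTranspose A b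
      (fun θ => by rw [Complex.norm_exp]; simp) (Gv_eq_add_smul_mulVec b hA)
      (fun k => hint _ (hG k)) (fun k l => hint _ ((hG k).mul (hG l).star)),
    measureReal_restrict_apply_univ]

end Resolvent

theorem stmt11 {n : ℕ} (A : Matrix (Fin n) (Fin n) ℂ) (b : Fin n → ℂ)
    (hA : SchurStable A) (S : Matrix (Fin n) (Fin n) ℂ)
    (hS : inRangeGamma A b S) :
    ∃ h : Fin n → ℂ,
      S - A * S * Aᴴ = vecMulVec b (star h) + vecMulVec h (star b) := by
  obtain ⟨μ, ν, hμ, hν, hSμν⟩ := hS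
  set E := Set.Ico (0 : ℝ) (2 * Real.pi)
  set c : ℝ := 1 / (2 * Real.pi)
  set Fμ := gramIntegral (μ.restrict E) (Gv A b)
  set Fν := gramIntegral (ν.restrict E) (Gv A b)
  have hSeq : S = c • (Fμ - Fν) := by
    ext i j
    rw [hSμν, Matrix.smul_apply, Complex.real_smul]
    rfl
  have hSAS : S - A * S * Aᴴ = c • ((Fμ - A * Fμ * Aᴴ) - (Fν - A * Fν * Aᴴ)) := by
    rw [hSeq, Matrix.mul_smul, Matrix.smul_mul, mul_sub, sub_mul]
    module
  refine ⟨c • ((fun i => ∫ θ in E, Gv A b θ i ∂μ) - fun i => ∫ θ in E, Gv A b θ i ∂ν)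
    - (c * (μ.real E - ν.real E) / 2) • b, ?_⟩
  rw [hSAS, gramIntegral_Gv_sub_mul_gramIntegral_Gv_mul_conjTranspose b hA μ,
    gramIntegral_Gv_sub_mul_gramIntegral_Gv_mul_conjTranspose b hA ν]
  simp only [star_sub, star_smul, star_trivial, vecMulVec_sub, sub_vecMulVec, vecMulVec_smul,
    smul_vecMulVec]
  module
end
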